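/- arXiv:1010.5593 — 4 statements merged into one kernel-verified Lean document; each statement's English description precedes it below -/
import Mathlib

section
/- Let q(s,t) and q*(s,t) be smooth functions satisfying the Bäcklund system (q* + q)_s = μ sin(q* − q) and (q* − q)_t = (1/μ) sin(q* + q) for some nonzero real constant μ. If q is a solution of the sine-Gordon equation q_{st} = sin q cos q, then q* is also a solution of the sine-Gordon equation. -/
/-- ∂/∂s of a function of two real variables. -/
noncomputable def pS (f : ℝ → ℝ → ℝ) (s t : ℝ) : ℝ := deriv (fun x => f x t) s

/-- ∂/∂t of a function of two real variables. -/
noncomputable def pT (f : ℝ → ℝ → ℝ) (s t : ℝ) : ℝ := deriv (fun y => f s y) t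

lemma trig_aux (a b : ℝ) :
    Real.sin (a + b) * Real.cos (a - b) = Real.sin a * Real.cos a + Real.sin b * Real.cos b := by
  rw [Real.sin_add, Real.cos_sub]
  linear_combination (Real.sin a * Real.cos a) * Real.sin_sq_add_cos_sq b
    + (Real.sin b * Real.cos b) * Real.sin_sq_add_cos_sq a

/-- If q, q* satisfy the Bäcklund system (q*+q)_s = μ sin(q*−q),
(q*−q)_t = (1/μ) sin(q*+q), and q solves the sine-Gordon equation
q_{st} = sin q cos q, then q* also solves the sine-Gordon equation. -/
theorem stmt2 (μ : ℝ) (hμ : μ ≠ 0) (q qstar : ℝ → ℝ → ℝ)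
    (hq : ContDiff ℝ (⊤ : ℕ∞) (fun p : ℝ × ℝ => q p.1 p.2))
    (hqstar : ContDiff ℝ (⊤ : ℕ∞) (fun p : ℝ × ℝ => qstar p.1 p.2))
    (hBT1 : ∀ s t, pS (fun a b => qstar a b + q a b) s t
      = μ * Real.sin (qstar s t - q s t))
    (hBT2 : ∀ s t, pT (fun a b => qstar a b - q a b) s t
      = (1 / μ) * Real.sin (qstar s t + q s t))
    (hSGE : ∀ s t, pT (pS q) s t = Real.sin (q s t) * Real.cos (q s t)) :
    ∀ s t, pT (pS qstar) s t = Real.sin (qstar s t) * Real.cos (qstar s t) := by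
  intro s t
  have hqd : Differentiable ℝ (fun p : ℝ × ℝ => q p.1 p.2) := hq.differentiable (by simp)
  have hqsd : Differentiable ℝ (fun p : ℝ × ℝ => qstar p.1 p.2) := hqstar.differentiable (by simp)
  have hline : ∀ a b : ℝ, HasDerivAt (fun x : ℝ => (x, b)) ((1:ℝ), (0:ℝ)) a :=
    fun a b => (hasDerivAt_id a).prodMk (hasDerivAt_const a b)
  have hqS : ∀ a b : ℝ, HasDerivAt (fun x => q x b)
      (fderiv ℝ (fun p : ℝ × ℝ => q p.1 p.2) (a, b) (1, 0)) a :=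
    fun a b => by have := (hqd (a, b)).hasFDerivAt.comp_hasDerivAt a (hline a b); exact this
  have hqsS : ∀ a b : ℝ, HasDerivAt (fun x => qstar x b)
      (fderiv ℝ (fun p : ℝ × ℝ => qstar p.1 p.2) (a, b) (1, 0)) a :=
    fun a b => by have := (hqsd (a, b)).hasFDerivAt.comp_hasDerivAt a (hline a b); exact this
  have hpSq : ∀ a b : ℝ, pS q a b
      = fderiv ℝ (fun p : ℝ × ℝ => q p.1 p.2) (a, b) (1, 0) :=
    fun a b => (hqS a b).deriv
  -- split the s-derivative of the sum
  have hsplit : ∀ b : ℝ, pS (fun a b => qstar a b + q a b) s b = pS qstar s b + pS q s b := by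
    intro b
    simp only [pS]
    exact deriv_add (hqsS s b).differentiableAt (hqS s b).differentiableAt
  have hstarS : ∀ b : ℝ, pS qstar s b = μ * Real.sin (qstar s b - q s b) - pS q s b := by
    intro b
    have h1 := hBT1 s b
    have h2 := hsplit b
    linarith
  -- differentiability in t
  have hcurve : Differentiable ℝ (fun y : ℝ => ((s, y) : ℝ × ℝ)) :=
    (differentiable_const s).prodMk differentiable_id
  have hDq : Differentiable ℝ (fun y => q s y) := hqd.comp hcurve
  have hDqs : Differentiable ℝ (fun y => qstar s y) := hqsd.comp hcurve
  have hg : Differentiable ℝ (fun y => qstar s y - q s y) := hDqs.sub hDq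
  have hgd : HasDerivAt (fun y => qstar s y - q s y)
      ((1 / μ) * Real.sin (qstar s t + q s t)) t := by
    have h := (hg t).hasDerivAt
    have h2 : deriv (fun y => qstar s y - q s y) t = (1 / μ) * Real.sin (qstar s t + q s t) := by
      have := hBT2 s t
      simpa [pT] using this
    rwa [h2] at h
  -- first term
  have hfirst : HasDerivAt (fun y => μ * Real.sin (qstar s y - q s y))
      (μ * (Real.cos (qstar s t - q s t) * ((1 / μ) * Real.sin (qstar s t + q s t)))) t :=
    (hgd.sin).const_mul μ
  -- second term: pS q is differentiable in t
  have hDS : Differentiable ℝ (fun p : ℝ × ℝ =>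
      fderiv ℝ (fun p : ℝ × ℝ => q p.1 p.2) p (1, 0)) :=
    ((hq.fderiv_right (m := 1) (by exact WithTop.coe_le_coe.mpr le_top)).clm_apply contDiff_const).differentiable (by simp)
  have hfun : (fun y => pS q s y)
      = fun y => fderiv ℝ (fun p : ℝ × ℝ => q p.1 p.2) (s, y) (1, 0) := funext (hpSq s)
  have hDpSq : DifferentiableAt ℝ (fun y => pS q s y) t := by
    rw [hfun]; exact (hDS.comp hcurve) t
  have hsecond : HasDerivAt (fun y => pS q s y) (pT (pS q) s t) t := by
    simpa [pT] using hDpSq.hasDerivAt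
  -- combine
  have hcomb : HasDerivAt (fun y => pS qstar s y)
      (μ * (Real.cos (qstar s t - q s t) * ((1 / μ) * Real.sin (qstar s t + q s t)))
        - pT (pS q) s t) t := by
    have h := hfirst.sub hsecond
    have hfun2 : ((fun y => μ * Real.sin (qstar s y - q s y)) - fun y => pS q s y)
        = fun y => pS qstar s y := funext fun b => (hstarS b).symm
    rwa [hfun2] at h
  have hval : pT (pS qstar) s t
      = μ * (Real.cos (qstar s t - q s t) * ((1 / μ) * Real.sin (qstar s t + q s t)))
        - pT (pS q) s t := hcomb.deriv
  rw [hval, hSGE s t]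
  have hμ' : μ * (Real.cos (qstar s t - q s t) * ((1 / μ) * Real.sin (qstar s t + q s t)))
      = Real.sin (qstar s t + q s t) * Real.cos (qstar s t - q s t) := by
    field_simp
  rw [hμ', trig_aux]
  ring
end

section
/- Let q(s,t) be a smooth function on ℝ². The Bäcklund system (q*+q)_s = μ sin(q*−q), (q*−q)_t = (1/μ) sin(q*+q) is compatible (i.e., the mixed partials of q* computed from the two equations agree identically) if and only if q is a solution of the sine-Gordon equation q_{st} = sin q cos q. -/
/-- The Bäcklund system (q*+q)_s = μ sin(q*−q), (q*−q)_t = (1/μ) sin(q*+q),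
i.e. q*_s = μ sin(q*−q) − q_s and q*_t = (1/μ) sin(q*+q) + q_t, is compatible
(the two expressions for the mixed partial q*_{st}, obtained by differentiating
the first equation in t and the second in s and substituting the system for the
first derivatives of q*, agree identically in (s,t) and in the value z of q*)
if and only if q solves the sine-Gordon equation q_{st} = sin q cos q. -/
theorem stmt3 (μ : ℝ) (hμ : μ ≠ 0) (q : ℝ → ℝ → ℝ)
    (hq : ContDiff ℝ (⊤ : ℕ∞) (fun p : ℝ × ℝ => q p.1 p.2)) :
    (∀ (z : ℝ) (s t : ℝ),
      pT (fun a b => μ * Real.sin (z - q a b) - pS q a b) s t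
        + (μ * Real.cos (z - q s t)) *
            ((1 / μ) * Real.sin (z + q s t) + pT q s t)
      = pS (fun a b => (1 / μ) * Real.sin (z + q a b) + pT q a b) s t
        + ((1 / μ) * Real.cos (z + q s t)) *
            (μ * Real.sin (z - q s t) - pS q s t)) ↔
    (∀ s t, pT (pS q) s t = Real.sin (q s t) * Real.cos (q s t)) := by
  set F : ℝ × ℝ → ℝ := fun p => q p.1 p.2 with hF
  have hFd : Differentiable ℝ F := hq.differentiable (by simp)
  have hFd2 : Differentiable ℝ (fderiv ℝ F) :=
    (hq.fderiv_right (m := 1) ((by exact WithTop.coe_le_coe.mpr le_top))).differentiable (by simp)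
  -- first-order facts
  have hS : ∀ s t, HasDerivAt (fun x => q x t) (fderiv ℝ F (s, t) (1, 0)) s := by
    intro s t
    have h1 : HasDerivAt (fun x : ℝ => ((x : ℝ), t)) ((1 : ℝ), (0 : ℝ)) s :=
      (hasDerivAt_id s).prodMk (hasDerivAt_const s t)
    exact (hFd (s, t)).hasFDerivAt.comp_hasDerivAt s h1
  have hT : ∀ s t, HasDerivAt (fun y => q s y) (fderiv ℝ F (s, t) (0, 1)) t := by
    intro s t
    have h1 : HasDerivAt (fun y : ℝ => ((s : ℝ), (y : ℝ))) ((0 : ℝ), (1 : ℝ)) t :=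
      (hasDerivAt_const t s).prodMk (hasDerivAt_id t)
    exact (hFd (s, t)).hasFDerivAt.comp_hasDerivAt t h1
  have hpS : ∀ s t, pS q s t = fderiv ℝ F (s, t) (1, 0) := fun s t => (hS s t).deriv
  have hpT : ∀ s t, pT q s t = fderiv ℝ F (s, t) (0, 1) := fun s t => (hT s t).deriv
  -- second-order facts
  set A : ℝ → ℝ → ℝ := fun s t => fderiv ℝ (fderiv ℝ F) (s, t) (0, 1) (1, 0) with hA
  have hsymm : ∀ s t, fderiv ℝ (fderiv ℝ F) (s, t) (1, 0) (0, 1) = A s t := by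
    intro s t
    exact (second_derivative_symmetric (fun y => (hFd y).hasFDerivAt)
      ((hFd2 (s, t)).hasFDerivAt) _ _)
  have hST : ∀ s t, HasDerivAt (fun y => pS q s y) (A s t) t := by
    intro s t
    have h1 : HasDerivAt (fun y : ℝ => ((s : ℝ), (y : ℝ))) ((0 : ℝ), (1 : ℝ)) t :=
      (hasDerivAt_const t s).prodMk (hasDerivAt_id t)
    have h2 : HasDerivAt (fun y => fderiv ℝ F (s, y))
        (fderiv ℝ (fderiv ℝ F) (s, t) (0, 1)) t :=
      (hFd2 (s, t)).hasFDerivAt.comp_hasDerivAt t h1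
    have h3 := h2.clm_apply (hasDerivAt_const t ((1 : ℝ), (0 : ℝ)))
    have h4 : HasDerivAt (fun y => fderiv ℝ F (s, y) (1, 0)) (A s t) t := by
      simpa using h3
    have he : (fun y => pS q s y) = fun y => fderiv ℝ F (s, y) (1, 0) :=
      funext fun y => hpS s y
    rw [he]; exact h4
  have hTS : ∀ s t, HasDerivAt (fun x => pT q x t) (A s t) s := by
    intro s t
    have h1 : HasDerivAt (fun x : ℝ => ((x : ℝ), t)) ((1 : ℝ), (0 : ℝ)) s :=
      (hasDerivAt_id s).prodMk (hasDerivAt_const s t)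
    have h2 : HasDerivAt (fun x => fderiv ℝ F (x, t))
        (fderiv ℝ (fderiv ℝ F) (s, t) (1, 0)) s :=
      (hFd2 (s, t)).hasFDerivAt.comp_hasDerivAt s h1
    have h3 := h2.clm_apply (hasDerivAt_const s ((0 : ℝ), (1 : ℝ)))
    have h4 : HasDerivAt (fun x => fderiv ℝ F (x, t) (0, 1)) (A s t) s := by
      rw [← hsymm s t]; simpa using h3
    have he : (fun x => pT q x t) = fun x => fderiv ℝ F (x, t) (0, 1) :=
      funext fun x => hpT x t
    rw [he]; exact h4
  have hApTpS : ∀ s t, pT (pS q) s t = A s t := fun s t => (hST s t).deriv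
  -- key pointwise computation
  have key : ∀ (z s t : ℝ),
      (pT (fun a b => μ * Real.sin (z - q a b) - pS q a b) s t
        + (μ * Real.cos (z - q s t)) *
            ((1 / μ) * Real.sin (z + q s t) + pT q s t)
      = pS (fun a b => (1 / μ) * Real.sin (z + q a b) + pT q a b) s t
        + ((1 / μ) * Real.cos (z + q s t)) *
            (μ * Real.sin (z - q s t) - pS q s t))
      ↔ A s t = Real.sin (q s t) * Real.cos (q s t) := by
    intro z s t
    have hT' : HasDerivAt (fun y => q s y) (pT q s t) t := by rw [hpT]; exact hT s t
    have hS' : HasDerivAt (fun x => q x t) (pS q s t) s := by rw [hpS]; exact hS s t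
    have e1 : pT (fun a b => μ * Real.sin (z - q a b) - pS q a b) s t
        = μ * (Real.cos (z - q s t) * (0 - pT q s t)) - A s t := by
      have h := ((((hasDerivAt_const t z).sub hT').sin.const_mul μ).sub (hST s t))
      exact h.deriv
    have e2 : pS (fun a b => (1 / μ) * Real.sin (z + q a b) + pT q a b) s t
        = (1 / μ) * (Real.cos (z + q s t) * (0 + pS q s t)) + A s t := by
      have h := ((((hasDerivAt_const s z).add hS').sin.const_mul (1 / μ)).add (hTS s t))
      exact h.deriv
    rw [e1, e2]
    have h2q : Real.sin (z + q s t) * Real.cos (z - q s t)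
        - Real.cos (z + q s t) * Real.sin (z - q s t)
        = 2 * (Real.sin (q s t) * Real.cos (q s t)) := by
      have h := Real.sin_sub (z + q s t) (z - q s t)
      rw [show (z + q s t) - (z - q s t) = 2 * q s t by ring, Real.sin_two_mul] at h
      linarith
    have EL : μ * (Real.cos (z - q s t) * (0 - pT q s t)) - A s t
        + μ * Real.cos (z - q s t) * ((1 / μ) * Real.sin (z + q s t) + pT q s t)
        = Real.cos (z - q s t) * Real.sin (z + q s t) - A s t := by
      field_simp; ring
    have ER : (1 / μ) * (Real.cos (z + q s t) * (0 + pS q s t)) + A s t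
        + (1 / μ) * Real.cos (z + q s t) * (μ * Real.sin (z - q s t) - pS q s t)
        = Real.cos (z + q s t) * Real.sin (z - q s t) + A s t := by
      field_simp; ring
    rw [EL, ER]
    constructor
    · intro h; linarith [h2q]
    · intro h; linarith [h2q]
  constructor
  · intro h s t
    rw [hApTpS s t]
    exact (key 0 s t).mp (h 0 s t)
  · intro h z s t
    exact (key z s t).mpr (by rw [← hApTpS s t]; exact h s t)
end

section
/- Let A : ℝ^n → O(n) be a smooth map, i.e., A(x)A(x)^t = I for all x, and suppose the entries satisfy (a_{ki})_{x_j} = f_{ij} a_{kj} for all 1 ≤ i ≠ j ≤ n and all k, where f_{ij} are smooth functions with f_{ii} = 0. Then for each i and k, (a_{ki})_{x_i} = −∑_{j} a_{kj} f_{ji}. Consequently A^{-1} dA = δ F^t − F δ, where F = (f_{ij}), δ = diag(dx_1, …, dx_n). -/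
open Matrix
open scoped BigOperators

/-- Partial derivative of a real-valued function on ℝⁿ in the j-th coordinate
direction. -/
noncomputable def pd {n : ℕ} (f : (Fin n → ℝ) → ℝ) (j : Fin n) (x : Fin n → ℝ) : ℝ :=
  fderiv ℝ f x (Pi.single j 1)

/-- If A : ℝⁿ → O(n) has entries a_{ki} satisfying (a_{ki})_{x_j} = f_{ij} a_{kj}
for i ≠ j (with f_{ii} = 0), then (a_{ki})_{x_i} = −∑_j a_{kj} f_{ji}, and hence
A⁻¹ dA = δF^t − Fδ, i.e. in the direction ∂/∂x_k the entry (i,j) of A⁻¹ ∂_k A is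
(if i = k then f_{ji} else 0) − (if j = k then f_{ij} else 0). -/
theorem stmt8 {n : ℕ} (A : (Fin n → ℝ) → Matrix (Fin n) (Fin n) ℝ)
    (f : Fin n → Fin n → (Fin n → ℝ) → ℝ)
    (hAsmooth : ∀ i j, ContDiff ℝ (⊤ : ℕ∞) (fun x => A x i j))
    (horth : ∀ x, A x * (A x)ᵀ = 1)
    (hfdiag : ∀ i x, f i i x = 0)
    (hsys : ∀ (k i j : Fin n), i ≠ j →
      ∀ x, pd (fun y => A y k i) j x = f i j x * A x k j) :
    (∀ (k i : Fin n) (x : Fin n → ℝ),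
        pd (fun y => A y k i) i x = -∑ j, A x k j * f j i x) ∧
    (∀ (x : Fin n → ℝ) (k : Fin n),
        (A x)⁻¹ * (Matrix.of fun i j => pd (fun y => A y i j) k x) =
          Matrix.of fun i j =>
            (if i = k then f j i x else 0) - (if j = k then f i j x else 0)) := by
  have hdiff : ∀ i j, Differentiable ℝ (fun x => A x i j) := fun i j =>
    (hAsmooth i j).differentiable (by simp)
  have horth' : ∀ x, (A x)ᵀ * A x = 1 := fun x => mul_eq_one_comm.mp (horth x)
  have hcol : ∀ (x : Fin n → ℝ) (i m : Fin n),
      ∑ l, A x l i * A x l m = (1 : Matrix (Fin n) (Fin n) ℝ) i m := by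
    intro x i m
    have := congrFun (congrFun (horth' x) i) m
    simpa [Matrix.mul_apply, Matrix.transpose_apply] using this
  -- derivative of orthogonality relation
  have hE : ∀ (k l i : Fin n) (x : Fin n → ℝ),
      ∑ j, (pd (fun y => A y k j) i x * A x l j
        + A x k j * pd (fun y => A y l j) i x) = 0 := by
    intro k l i x
    have h1 : HasFDerivAt (fun y => ∑ j, A y k j * A y l j)
        (∑ j, (A x k j • fderiv ℝ (fun y => A y l j) x
          + A x l j • fderiv ℝ (fun y => A y k j) x)) x :=
      HasFDerivAt.fun_sum fun j _ =>
        ((hdiff k j x).hasFDerivAt.mul (hdiff l j x).hasFDerivAt)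
    have hconst : (fun y => ∑ j, A y k j * A y l j)
        = fun _ => (1 : Matrix (Fin n) (Fin n) ℝ) k l := by
      funext y
      have := congrFun (congrFun (horth y) k) l
      simpa [Matrix.mul_apply, Matrix.transpose_apply] using this
    have h0 : HasFDerivAt (fun y => ∑ j, A y k j * A y l j)
        (0 : (Fin n → ℝ) →L[ℝ] ℝ) x := by
      rw [hconst]; exact hasFDerivAt_const _ _
    have huniq := h1.unique h0
    have := congrArg (fun (L : (Fin n → ℝ) →L[ℝ] ℝ) => L (Pi.single i 1)) huniq
    simp only [ContinuousLinearMap.sum_apply, ContinuousLinearMap.add_apply,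
      ContinuousLinearMap.smul_apply, ContinuousLinearMap.zero_apply,
      smul_eq_mul] at this
    rw [← this]
    apply Finset.sum_congr rfl
    intro j _
    simp only [pd]
    ring
  -- Part 1
  have part1 : ∀ (k i : Fin n) (x : Fin n → ℝ),
      pd (fun y => A y k i) i x = -∑ j, A x k j * f j i x := by
    intro k i x
    set S : Fin n → ℝ := fun k => ∑ j, A x k j * f j i x with hS
    set g : Fin n → ℝ := fun k => pd (fun y => A y k i) i x + S k with hgdef
    have hg : ∀ k l, g k * A x l i + A x k i * g l = 0 := by
      intro k l
      have hE' := hE k l i x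
      -- split off the j = i term
      rw [← Finset.sum_erase_add _ _ (Finset.mem_univ i)] at hE'
      have hrw : ∑ j ∈ Finset.univ.erase i,
          (pd (fun y => A y k j) i x * A x l j
            + A x k j * pd (fun y => A y l j) i x)
          = ∑ j ∈ Finset.univ.erase i,
          (f j i x * A x k i * A x l j + A x k j * (f j i x * A x l i)) := by
        apply Finset.sum_congr rfl
        intro j hj
        have hji : j ≠ i := Finset.ne_of_mem_erase hj
        rw [hsys k j i hji x, hsys l j i hji x]
      rw [hrw] at hE'
      have hfull : ∑ j ∈ Finset.univ.erase i,
          (f j i x * A x k i * A x l j + A x k j * (f j i x * A x l i))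
          = ∑ j, (f j i x * A x k i * A x l j + A x k j * (f j i x * A x l i)) := by
        apply Finset.sum_erase
        simp [hfdiag i x]
      rw [hfull] at hE'
      have hsum : ∑ j, (f j i x * A x k i * A x l j + A x k j * (f j i x * A x l i))
          = A x k i * S l + A x l i * S k := by
        rw [Finset.sum_add_distrib, hS, Finset.mul_sum, Finset.mul_sum]
        congr 1
        · apply Finset.sum_congr rfl; intro j _; ring
        · apply Finset.sum_congr rfl; intro j _; ring
      rw [hsum] at hE'
      simp only [hgdef]
      linarith [hE']
    have hcol1 : ∑ l, A x l i * A x l i = 1 := by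
      simpa using hcol x i i
    set s : ℝ := ∑ l, g l * A x l i with hsdef
    have hks : ∀ k, g k + A x k i * s = 0 := by
      intro k
      have : ∑ l, (g k * A x l i + A x k i * g l) * A x l i = 0 := by
        simp [hg]
      calc g k + A x k i * s
          = g k * (∑ l, A x l i * A x l i) + A x k i * ∑ l, g l * A x l i := by
            rw [hcol1]; ring
        _ = ∑ l, (g k * A x l i + A x k i * g l) * A x l i := by
            rw [Finset.mul_sum, Finset.mul_sum, ← Finset.sum_add_distrib]
            apply Finset.sum_congr rfl; intro l _; ring
        _ = 0 := this
    have hs : s = 0 := by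
      have : s = -s := by
        calc s = ∑ l, g l * A x l i := hsdef
          _ = ∑ l, (-(A x l i * s)) * A x l i := by
              apply Finset.sum_congr rfl
              intro l _
              have := hks l
              have hgl : g l = -(A x l i * s) := by linarith
              rw [hgl]
          _ = -s * ∑ l, A x l i * A x l i := by
              rw [Finset.mul_sum]; apply Finset.sum_congr rfl; intro l _; ring
          _ = -s := by rw [hcol1]; ring
      linarith
    have hgk := hks k
    rw [hs] at hgk
    have : g k = 0 := by linarith
    simp only [hgdef, hS] at this
    linarith [this]
  refine ⟨part1, ?_⟩
  intro x k
  have hinv : (A x)⁻¹ = (A x)ᵀ := Matrix.inv_eq_left_inv (horth' x)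
  rw [hinv]
  ext i j
  rw [Matrix.mul_apply]
  simp only [Matrix.of_apply, Matrix.transpose_apply]
  by_cases hjk : j = k
  · subst hjk
    have : ∑ l, A x l i * pd (fun y => A y l j) j x
        = ∑ l, A x l i * (-∑ m, A x l m * f m j x) := by
      apply Finset.sum_congr rfl
      intro l _
      rw [part1 l j x]
    rw [this]
    have : ∑ l, A x l i * (-∑ m, A x l m * f m j x)
        = -∑ m, (∑ l, A x l i * A x l m) * f m j x := by
      calc ∑ l, A x l i * (-∑ m, A x l m * f m j x)
          = ∑ l, ∑ m, -(A x l i * (A x l m * f m j x)) := by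
            apply Finset.sum_congr rfl
            intro l _
            rw [mul_neg, Finset.mul_sum, ← Finset.sum_neg_distrib]
        _ = ∑ m, ∑ l, -(A x l i * (A x l m * f m j x)) := Finset.sum_comm
        _ = -∑ m, (∑ l, A x l i * A x l m) * f m j x := by
            rw [← Finset.sum_neg_distrib]
            apply Finset.sum_congr rfl
            intro m _
            rw [Finset.sum_mul, ← Finset.sum_neg_distrib]
            apply Finset.sum_congr rfl
            intro l _
            ring
    rw [this]
    have : ∀ m, (∑ l, A x l i * A x l m) = if i = m then 1 else 0 := by
      intro m; rw [hcol x i m, Matrix.one_apply]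
    simp only [this]
    rcases eq_or_ne i j with hij | hij
    · subst hij
      simp [hfdiag i x]
    · simp [hij, Finset.sum_ite_eq, Finset.mem_univ]
  · have : ∑ l, A x l i * pd (fun y => A y l j) k x
        = ∑ l, A x l i * (f j k x * A x l k) := by
      apply Finset.sum_congr rfl
      intro l _
      rw [hsys l j k hjk x]
    rw [this]
    have : ∑ l, A x l i * (f j k x * A x l k)
        = f j k x * ∑ l, A x l i * A x l k := by
      rw [Finset.mul_sum]; apply Finset.sum_congr rfl; intro l _; ring
    rw [this, hcol x i k, Matrix.one_apply]
    rcases eq_or_ne i k with hik | hik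
    · subst hik; simp [hjk]
    · simp [hik, hjk]
end

section
/- Let α₁, α₂ ∈ ℂ \ ℝ with α₁ ∉ {α₂, ᾱ₂}, and let π₁, π₂ be Hermitian projections of ℂⁿ onto one-dimensional subspaces. Define Hermitian projections τ₁, τ₂ by Im τ₁ = g_{α₂,π₂}(α₁)(Im π₁) and Im τ₂ = g_{α₁,π₁}(α₂)(Im π₂) (assuming these images are nonzero). Then the permutability identity g_{α₂,τ₂}(λ) g_{α₁,π₁}(λ) = g_{α₁,τ₁}(λ) g_{α₂,π₂}(λ) holds for all λ where both sides are defined. -/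
/-!
Clearing denominators, `N_{α,π}(λ) := (λ - α) g_{α,π}(λ) = (λ - ᾱ) + (ᾱ - α) π` is affine in `λ`
with leading coefficient `1`, so `N_{α₂,τ₂} N_{α₁,π₁} - N_{α₁,τ₁} N_{α₂,π₂}` is affine in `λ` and
it suffices that it vanishes at `λ = ᾱ₁` and `λ = ᾱ₂`. Since `N_{α,π}(ᾱ) = (ᾱ - α) π`, vanishing at
`ᾱ₁` is the rank-one identity `N_{α₂,τ₂}(ᾱ₁) π₁ = τ₁ N_{α₂,π₂}(ᾱ₁)`, a polynomial identity in the
Gram matrix of `v₁, v₂`; vanishing at `ᾱ₂` is the same identity with the indices swapped.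
-/

open Matrix
open scoped BigOperators

/-- The simple rational loop g_{α,π}(λ) = π + ((λ−ᾱ)/(λ−α)) π^⊥. -/
noncomputable def gsimple {n : ℕ} (α : ℂ) (π : Matrix (Fin n) (Fin n) ℂ) (l : ℂ) :
    Matrix (Fin n) (Fin n) ℂ :=
  π + ((l - (starRingEnd ℂ) α) / (l - α)) • ((1 : Matrix (Fin n) (Fin n) ℂ) - π)

/-- The Hermitian projection of ℂⁿ onto the line ℂv: vv*/‖v‖². -/
noncomputable def projLine {n : ℕ} (v : Fin n → ℂ) : Matrix (Fin n) (Fin n) ℂ :=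
  (∑ k, (starRingEnd ℂ) (v k) * v k)⁻¹ •
    Matrix.of fun i j => v i * (starRingEnd ℂ) (v j)

open ComplexOrder

section

variable {n : ℕ}

lemma projLine_eq (v : Fin n → ℂ) :
    projLine v = (star v ⬝ᵥ v)⁻¹ • vecMulVec v (star v) := rfl

lemma projLine_smul {c : ℂ} (hc : c ≠ 0) (v : Fin n → ℂ) : projLine (c • v) = projLine v := by
  simp only [projLine_eq, star_smul, smul_dotProduct, dotProduct_smul, smul_vecMulVec,
    vecMulVec_smul, smul_smul, smul_eq_mul]
  congr 1
  field_simp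
  rw [div_mul_cancel_left₀ (star_ne_zero.mpr hc), one_div]

def gsimpleNumer (α : ℂ) (P : Matrix (Fin n) (Fin n) ℂ) (l : ℂ) : Matrix (Fin n) (Fin n) ℂ :=
  (l - star α) • 1 + (star α - α) • P

lemma gsimple_eq_inv_smul_gsimpleNumer {α l : ℂ} (hl : l ≠ α) (P : Matrix (Fin n) (Fin n) ℂ) :
    gsimple α P l = (l - α)⁻¹ • gsimpleNumer α P l := by
  have hl' : l - α ≠ 0 := sub_ne_zero.mpr hl
  rw [gsimple, gsimpleNumer, starRingEnd_apply]
  match_scalars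
  · field_simp
    ring
  · field_simp

lemma gsimpleNumer_mul_eq_of_eq_at_conj {α₁ α₂ : ℂ} (hα : α₁ ≠ α₂)
    {P₁ P₂ Q₁ Q₂ : Matrix (Fin n) (Fin n) ℂ}
    (h₁ : gsimpleNumer α₂ Q₂ (star α₁) * P₁ = Q₁ * gsimpleNumer α₂ P₂ (star α₁))
    (h₂ : gsimpleNumer α₁ Q₁ (star α₂) * P₂ = Q₂ * gsimpleNumer α₁ P₁ (star α₂)) (l : ℂ) :
    gsimpleNumer α₂ Q₂ l * gsimpleNumer α₁ P₁ l = gsimpleNumer α₁ Q₁ l * gsimpleNumer α₂ P₂ l := by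
  have hα' : star α₁ - star α₂ ≠ 0 := sub_ne_zero.mpr (star_injective.ne hα)
  apply smul_right_injective _ hα'
  simp only [gsimpleNumer, add_mul, mul_add, smul_mul_assoc, mul_smul_comm, Matrix.one_mul,
    Matrix.mul_one, smul_add, smul_smul] at h₁ h₂ ⊢
  -- the difference of the two sides is affine in `l`; `h₁`, `h₂` are its values at `ᾱ₁`, `ᾱ₂`
  linear_combination (norm := module)
    ((l - star α₂) * (star α₁ - α₁)) • h₁ + ((l - star α₁) * (star α₂ - α₂)) • h₂

def gsimpleNumerVec (α : ℂ) (v : Fin n → ℂ) (l : ℂ) (x : Fin n → ℂ) : Fin n → ℂ :=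
  ((l - star α) * (star v ⬝ᵥ v)) • x + ((star α - α) * (star v ⬝ᵥ x)) • v

lemma gsimpleNumerVec_eq_smul_gsimple_mulVec {α l : ℂ} (hl : l ≠ α) {v : Fin n → ℂ}
    (hv : v ≠ 0) (x : Fin n → ℂ) :
    gsimpleNumerVec α v l x = ((l - α) * (star v ⬝ᵥ v)) • (gsimple α (projLine v) l *ᵥ x) := by
  have hl' : l - α ≠ 0 := sub_ne_zero.mpr hl
  have hn : star v ⬝ᵥ v ≠ 0 := dotProduct_star_self_eq_zero.not.mpr hv
  rw [gsimple_eq_inv_smul_gsimpleNumer hl, gsimpleNumerVec, gsimpleNumer, projLine_eq]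
  simp only [smul_mulVec, add_mulVec, one_mulVec, vecMulVec_mulVec, op_smul_eq_smul, smul_add,
    smul_smul]
  match_scalars <;> field_simp

lemma projLine_gsimple_mulVec {α l : ℂ} (hl : l ≠ α) {v : Fin n → ℂ} (hv : v ≠ 0)
    (x : Fin n → ℂ) :
    projLine (gsimple α (projLine v) l *ᵥ x) = projLine (gsimpleNumerVec α v l x) := by
  rw [gsimpleNumerVec_eq_smul_gsimple_mulVec hl hv,
    projLine_smul (mul_ne_zero (sub_ne_zero.mpr hl) (dotProduct_star_self_eq_zero.not.mpr hv))]

lemma gsimpleNumerVec_ne_zero {α l : ℂ} (hl : l ≠ α) {v x : Fin n → ℂ} (hv : v ≠ 0)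
    (h : gsimple α (projLine v) l *ᵥ x ≠ 0) : gsimpleNumerVec α v l x ≠ 0 := by
  rw [gsimpleNumerVec_eq_smul_gsimple_mulVec hl hv]
  exact smul_ne_zero
    (mul_ne_zero (sub_ne_zero.mpr hl) (dotProduct_star_self_eq_zero.not.mpr hv)) h

lemma gsimpleNumer_conj_mul_projLine {α₁ α₂ : ℂ} {v₁ v₂ : Fin n → ℂ}
    (hw₁ : gsimpleNumerVec α₂ v₂ α₁ v₁ ≠ 0) (hw₂ : gsimpleNumerVec α₁ v₁ α₂ v₂ ≠ 0) :
    gsimpleNumer α₂ (projLine (gsimpleNumerVec α₁ v₁ α₂ v₂)) (star α₁) * projLine v₁ =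
      projLine (gsimpleNumerVec α₂ v₂ α₁ v₁) * gsimpleNumer α₂ (projLine v₂) (star α₁) := by
  have hn₁ : star v₁ ⬝ᵥ v₁ ≠ 0 := by
    rw [Ne, dotProduct_star_self_eq_zero]
    rintro rfl
    simp [gsimpleNumerVec] at hw₁
  have hn₂ : star v₂ ⬝ᵥ v₂ ≠ 0 := by
    rw [Ne, dotProduct_star_self_eq_zero]
    rintro rfl
    simp [gsimpleNumerVec] at hw₁
  have hD₁ := dotProduct_star_self_eq_zero.not.mpr hw₁
  have hD₂ := dotProduct_star_self_eq_zero.not.mpr hw₂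
  generalize hW₁ : gsimpleNumerVec α₂ v₂ α₁ v₁ = W₁ at hD₁ ⊢
  generalize hW₂ : gsimpleNumerVec α₁ v₁ α₂ v₂ = W₂ at hD₂ ⊢
  simp only [projLine_eq, gsimpleNumer]
  generalize hd₁ : star W₁ ⬝ᵥ W₁ = D₁ at hD₁ ⊢
  generalize hd₂ : star W₂ ⬝ᵥ W₂ = D₂ at hD₂ ⊢
  subst W₁ W₂
  simp only [gsimpleNumerVec, star_add, star_smul, add_vecMulVec, vecMulVec_add, smul_vecMulVec,
    vecMulVec_smul, add_mul, mul_add, smul_mul_assoc, mul_smul_comm, Matrix.one_mul,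
    Matrix.mul_one, vecMulVec_mul_vecMulVec, dotProduct_add, add_dotProduct, dotProduct_smul,
    smul_dotProduct, smul_add, smul_smul, star_mul', star_sub, star_star, ← star_dotProduct,
    smul_eq_mul] at hd₁ hd₂ ⊢
  match_scalars
  -- only after clearing `D₁`, `D₂` do the coefficients agree as polynomials in the Gram entries
  all_goals
    field_simp
    subst D₁ D₂
    ring

end

theorem stmt13_general {n : ℕ} (α₁ α₂ : ℂ)
    (hne : α₁ ≠ α₂)
    (v₁ v₂ : Fin n → ℂ) (hv₁ : v₁ ≠ 0) (hv₂ : v₂ ≠ 0)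
    (w₁ w₂ : Fin n → ℂ)
    (hw₁ : w₁ = (gsimple α₂ (projLine v₂) α₁).mulVec v₁)
    (hw₂ : w₂ = (gsimple α₁ (projLine v₁) α₂).mulVec v₂)
    (hw₁0 : w₁ ≠ 0) (hw₂0 : w₂ ≠ 0) :
    ∀ l : ℂ, l ≠ α₁ → l ≠ α₂ →
      gsimple α₂ (projLine w₂) l * gsimple α₁ (projLine v₁) l =
        gsimple α₁ (projLine w₁) l * gsimple α₂ (projLine v₂) l := by
  intro l hl₁ hl₂
  subst hw₁ hw₂
  have hW₁ := gsimpleNumerVec_ne_zero hne hv₂ hw₁0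
  have hW₂ := gsimpleNumerVec_ne_zero hne.symm hv₁ hw₂0
  have h := gsimpleNumer_mul_eq_of_eq_at_conj hne (gsimpleNumer_conj_mul_projLine hW₁ hW₂)
    (gsimpleNumer_conj_mul_projLine hW₂ hW₁) l
  rw [projLine_gsimple_mulVec hne hv₂, projLine_gsimple_mulVec hne.symm hv₁,
    gsimple_eq_inv_smul_gsimpleNumer hl₁, gsimple_eq_inv_smul_gsimpleNumer hl₁,
    gsimple_eq_inv_smul_gsimpleNumer hl₂, gsimple_eq_inv_smul_gsimpleNumer hl₂,
    smul_mul_smul_comm, smul_mul_smul_comm, h, mul_comm]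

/-- Permutability: with τ₁, τ₂ the Hermitian projections onto
g_{α₂,π₂}(α₁)(Im π₁) and g_{α₁,π₁}(α₂)(Im π₂) respectively,
g_{α₂,τ₂} g_{α₁,π₁} = g_{α₁,τ₁} g_{α₂,π₂}. -/
theorem stmt13 {n : ℕ} (α₁ α₂ : ℂ) (h1 : α₁.im ≠ 0) (h2 : α₂.im ≠ 0)
    (hne : α₁ ≠ α₂) (hne' : α₁ ≠ (starRingEnd ℂ) α₂)
    (v₁ v₂ : Fin n → ℂ) (hv₁ : v₁ ≠ 0) (hv₂ : v₂ ≠ 0)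
    (w₁ w₂ : Fin n → ℂ)
    (hw₁ : w₁ = (gsimple α₂ (projLine v₂) α₁).mulVec v₁)
    (hw₂ : w₂ = (gsimple α₁ (projLine v₁) α₂).mulVec v₂)
    (hw₁0 : w₁ ≠ 0) (hw₂0 : w₂ ≠ 0) :
    ∀ l : ℂ, l ≠ α₁ → l ≠ α₂ →
      gsimple α₂ (projLine w₂) l * gsimple α₁ (projLine v₁) l =
        gsimple α₁ (projLine w₁) l * gsimple α₂ (projLine v₂) l :=
  stmt13_general α₁ α₂ hne v₁ v₂ hv₁ hv₂ w₁ w₂ hw₁ hw₂ hw₁0 hw₂0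
end
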